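/- arXiv:2502.06044 — 2 statements merged into one kernel-verified Lean document; each statement's English description precedes it below -/
import Mathlib

section
/- Let ψ be four times continuously differentiable and even with ψ(0) = 1, ψ''(0) = −a, a > 0, and let γ > 0, h = γ^{1/4}. Define A = a − 2(−ah + R₂(h))² / (2ah² − R₁(2h) + γ), where |R₁(r)| ≤ C r⁴ and |R₂(r)| ≤ C |r|³ near 0. Then there exist constants C', γ₀ > 0 such that A ≤ C' √γ for all 0 < γ ≤ γ₀. -/
/-- The per-coordinate residual gradient-uncertainty bound is `O(√γ)`: with
`h = γ^{1/4}` and remainders `R₁, R₂` satisfying `|R₁(r)| ≤ C r⁴`, `|R₂(r)| ≤ C |r|³`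
near `0`, the quantity `A = a − 2(−ah + R₂(h))²/(2ah² − R₁(2h) + γ)` satisfies
`A ≤ C' √γ` for all sufficiently small `γ > 0`. -/
theorem residual_uncertainty_bound (a C r₀ : ℝ) (ha : 0 < a) (hC : 0 ≤ C) (hr₀ : 0 < r₀)
    (R₁ R₂ : ℝ → ℝ)
    (hR₁ : ∀ r : ℝ, |r| ≤ r₀ → |R₁ r| ≤ C * r ^ 4)
    (hR₂ : ∀ r : ℝ, |r| ≤ r₀ → |R₂ r| ≤ C * |r| ^ 3) :
    ∃ C' > (0:ℝ), ∃ γ₀ > (0:ℝ), ∀ γ : ℝ, 0 < γ → γ ≤ γ₀ →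
      a - 2 * (-(a * γ ^ ((1:ℝ)/4)) + R₂ (γ ^ ((1:ℝ)/4))) ^ 2 /
          (2 * a * (γ ^ ((1:ℝ)/4)) ^ 2 - R₁ (2 * γ ^ ((1:ℝ)/4)) + γ)
        ≤ C' * Real.sqrt γ := by
  refine ⟨20*C+1, by linarith, min ((r₀/2)^4) ((a/(16*C+1))^2), by positivity, ?_⟩
  intro γ hγ hγ₀
  set h := γ ^ ((1:ℝ)/4) with hh
  have hh0 : 0 < h := Real.rpow_pos_of_pos hγ _
  have h4 : h ^ 4 = γ := by
    rw [hh, ← Real.rpow_natCast (γ ^ ((1:ℝ)/4)) 4, ← Real.rpow_mul hγ.le]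
    norm_num
  have h2 : h ^ 2 = Real.sqrt γ := by
    rw [hh, ← Real.rpow_natCast (γ ^ ((1:ℝ)/4)) 2, ← Real.rpow_mul hγ.le,
      Real.sqrt_eq_rpow]
    norm_num
  have hγ1 : γ ≤ (r₀/2)^4 := le_trans hγ₀ (min_le_left _ _)
  have hγ2 : γ ≤ (a/(16*C+1))^2 := le_trans hγ₀ (min_le_right _ _)
  have hhr : h ≤ r₀ / 2 := by
    have : h ^ 4 ≤ (r₀/2) ^ 4 := by rw [h4]; exact hγ1
    exact le_of_pow_le_pow_left₀ (by norm_num) (by positivity) this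
  have hha : h ^ 2 ≤ a / (16*C+1) := by
    have : (h ^ 2) ^ 2 ≤ (a/(16*C+1)) ^ 2 := by rw [← pow_mul]; rw [show 2*2=4 from rfl, h4]; exact hγ2
    exact le_of_pow_le_pow_left₀ (by norm_num) (by positivity) this
  have hb2 : |R₂ h| ≤ C * h ^ 3 := by
    have := hR₂ h (by rw [abs_of_pos hh0]; linarith)
    rwa [abs_of_pos hh0] at this
  have hb1 : |R₁ (2*h)| ≤ 16 * C * h ^ 4 := by
    have := hR₁ (2*h) (by rw [abs_of_pos (by linarith)]; linarith)
    calc |R₁ (2*h)| ≤ C * (2*h)^4 := this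
    _ = 16 * C * h ^ 4 := by ring
  rw [abs_le] at hb2 hb1
  have h16 : (16*C+1) * h ^ 2 ≤ a := by
    rw [le_div_iff₀ (by positivity)] at hha
    linarith
  have hD : a * h ^ 2 ≤ 2 * a * h ^ 2 - R₁ (2*h) + γ := by
    nlinarith [hb1.2, sq_nonneg h]
  have hDpos : 0 < 2 * a * h ^ 2 - R₁ (2*h) + γ := lt_of_lt_of_le (by positivity) hD
  rw [← h2, sub_le_comm, le_div_iff₀ hDpos]
  nlinarith [hb2.2, hb1.1, sq_nonneg (R₂ h), mul_pos ha hh0, hD,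
    mul_le_mul_of_nonneg_left hb2.2 (by positivity : (0:ℝ) ≤ 4*a*h),
    mul_le_mul_of_nonneg_left hD (by positivity : (0:ℝ) ≤ (20*C+1)*h^2),
    sq_nonneg h]
end

section
/- Let H be a reproducing kernel Hilbert space with kernel k that is twice continuously differentiable, let f ∈ H with ‖f‖_H ≤ C, let D be a finite set of points with k(D,D) invertible, and define g(θ) = ∇k(θ, D) k(D,D)^{-1} f(D). Then ‖∇f(θ) − g(θ)‖² ≤ C² · Tr(∇k_D(θ,θ)∇^⊤), where ∇k_D(θ,θ)∇^⊤ is the posterior gradient covariance matrix with entries ∂_{θ_i}∂_{θ'_j}[k(θ,θ') − k(θ,D)k(D,D)^{-1}k(D,θ')]|_{θ'=θ}. -/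
/-!
Viewed in the completion of `H`, the feature map `Φ` is Fréchet differentiable at `θ`. Indeed, for
a `C²` kernel, `⟪Φ(θ+a) - Φθ, Φ(θ+b) - Φθ⟫ = B(a,b) + o(‖a‖‖b‖)` with `B` the mixed second
derivative of `k` at `(θ, θ)`; hence the difference quotients `t⁻¹ (Φ(θ+tv) - Φθ)` are Cauchy,
their limits form a linear map `L` with `⟪La, Lb⟫ = B(a,b)`, and
`‖Φ(θ+h) - Φθ - Lh‖² = o(‖h‖²)`.
So, with `u = L eᵢ`, the derivatives in the bound are inner products: `∂ᵢf(θ) = ⟪w, u⟫`,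
`∂ᵢk(·, y)(θ) = ⟪Φ y, u⟫` and the mixed second derivative of `k` is `⟪u, u⟫`. If `s` is the
orthogonal projection of `u` onto the span of the features `Φ(D l)`, the `i`-th error term is
`⟪w, u - s⟫` and the `i`-th diagonal entry of the posterior covariance is `‖u - s‖²`, so
Cauchy–Schwarz bounds each term.
-/

open Set Filter Metric Finset
open scoped Matrix
open scoped RealInnerProductSpace Topology

section MixedDifference

variable {E F G : Type*} [NormedAddCommGroup E] [NormedSpace ℝ E]
  [NormedAddCommGroup F] [NormedSpace ℝ F] [NormedAddCommGroup G] [NormedSpace ℝ G]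

theorem HasFDerivAt.hasDerivAt_comp_add_smul {f : E → G} {f' : E →L[ℝ] G} {x v : E} {t : ℝ}
    (hf : HasFDerivAt f f' (x + t • v)) : HasDerivAt (fun s : ℝ => f (x + s • v)) (f' v) t := by
  have hline : HasDerivAt (fun s : ℝ => x + s • v) v t := by
    simpa using ((hasDerivAt_id t).smul_const v).const_add x
  exact hf.comp_hasDerivAt t hline

theorem exists_mixed_sub_eq_fderiv_fderiv {κ : E × F → ℝ} (h₁ : Differentiable ℝ κ)
    (h₂ : Differentiable ℝ (fderiv ℝ κ)) (x : E) (y : F) (a : E) (b : F) :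
    ∃ σ ∈ Ioo (0 : ℝ) 1, ∃ τ ∈ Ioo (0 : ℝ) 1,
      κ (x + a, y + b) - κ (x + a, y) - κ (x, y + b) + κ (x, y) =
        fderiv ℝ (fderiv ℝ κ) (x + σ • a, y + τ • b) (a, 0) (0, b) := by
  have hg : ∀ t : ℝ,
      HasDerivAt (fun t : ℝ => κ ((x + a, y) + t • (0, b)) - κ ((x, y) + t • (0, b)))
        (fderiv ℝ κ ((x + a, y) + t • (0, b)) (0, b) - fderiv ℝ κ ((x, y) + t • (0, b)) (0, b))
        t :=
    fun t => (h₁ _).hasFDerivAt.hasDerivAt_comp_add_smul.sub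
      (h₁ _).hasFDerivAt.hasDerivAt_comp_add_smul
  obtain ⟨τ, hτ, hτeq⟩ := exists_hasDerivAt_eq_slope _ _ one_pos
    (fun t _ => (hg t).continuousAt.continuousWithinAt) (fun t _ => hg t)
  have hh : ∀ s : ℝ, HasDerivAt (fun s : ℝ => fderiv ℝ κ ((x, y + τ • b) + s • (a, 0)) (0, b))
      (fderiv ℝ (fderiv ℝ κ) ((x, y + τ • b) + s • (a, 0)) (a, 0) (0, b)) s :=
    fun s => (((ContinuousLinearMap.apply ℝ ℝ ((0 : E), b)).hasFDerivAt.comp _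
      (h₂ _).hasFDerivAt).hasDerivAt_comp_add_smul)
  obtain ⟨σ, hσ, hσeq⟩ := exists_hasDerivAt_eq_slope _ _ one_pos
    (fun s _ => (hh s).continuousAt.continuousWithinAt) (fun s _ => hh s)
  refine ⟨σ, hσ, τ, hτ, ?_⟩
  simp only [Prod.smul_mk, smul_zero, Prod.mk_add_mk, add_zero, zero_smul, one_smul, sub_zero,
    div_one] at hτeq hσeq
  rw [hσeq, hτeq]
  ring

theorem abs_mixed_sub_sub_fderiv_fderiv_le {κ : E × F → ℝ} (hκ : ContDiff ℝ 2 κ) (x : E) (y : F)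
    {ε : ℝ} (hε : 0 < ε) :
    ∃ δ > 0, ∀ (a : E) (b : F), ‖a‖ ≤ δ → ‖b‖ ≤ δ →
      |κ (x + a, y + b) - κ (x + a, y) - κ (x, y + b) + κ (x, y)
        - fderiv ℝ (fderiv ℝ κ) (x, y) (a, 0) (0, b)| ≤ ε * ‖a‖ * ‖b‖ := by
  have h₂ : ContDiff ℝ 1 (fderiv ℝ κ) := hκ.fderiv_right le_rfl
  obtain ⟨δ, hδ, hnear⟩ := nhds_basis_closedBall.eventually_iff.1 <|
    (h₂.continuous_fderiv one_ne_zero).continuousAt.eventually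
      (ball_mem_nhds (fderiv ℝ (fderiv ℝ κ) (x, y)) hε)
  refine ⟨δ, hδ, fun a b ha hb => ?_⟩
  obtain ⟨σ, hσ, τ, hτ, hmixed⟩ := exists_mixed_sub_eq_fderiv_fderiv
    (hκ.differentiable two_ne_zero) (h₂.differentiable one_ne_zero) x y a b
  have hmem : (x + σ • a, y + τ • b) ∈ closedBall (x, y) δ := by
    rw [mem_closedBall, Prod.dist_eq, dist_self_add_left, dist_self_add_left]
    refine max_le ?_ ?_
    · rw [norm_smul, Real.norm_of_nonneg hσ.1.le]; nlinarith [norm_nonneg a, hσ.2]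
    · rw [norm_smul, Real.norm_of_nonneg hτ.1.le]; nlinarith [norm_nonneg b, hτ.2]
  have hclose := hnear hmem
  rw [dist_eq_norm (E := E × F →L[ℝ] E × F →L[ℝ] ℝ)] at hclose
  rw [hmixed]
  set δB := fderiv ℝ (fderiv ℝ κ) (x + σ • a, y + τ • b) - fderiv ℝ (fderiv ℝ κ) (x, y)
  calc |δB (a, 0) (0, b)| ≤ ‖δB‖ * ‖((a, 0) : E × F)‖ * ‖((0, b) : E × F)‖ := by
        rw [← Real.norm_eq_abs]; exact δB.le_opNorm₂ _ _
    _ ≤ ε * ‖a‖ * ‖b‖ := by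
      simp only [Prod.norm_mk, norm_zero, norm_nonneg, max_eq_left, max_eq_right]
      gcongr

end MixedDifference

section InnerIncrements

variable {E V : Type*} [NormedAddCommGroup E] [NormedSpace ℝ E]
  [NormedAddCommGroup V] [InnerProductSpace ℝ V]

def InnerApproxBilinear (Δ : E → V) (B : E →L[ℝ] E →L[ℝ] ℝ) : Prop :=
  ∀ ε > 0, ∃ δ > 0, ∀ a b : E, ‖a‖ ≤ δ → ‖b‖ ≤ δ → |⟪Δ a, Δ b⟫ - B a b| ≤ ε * ‖a‖ * ‖b‖

theorem eventually_ne_zero_and_norm_smul_le (v : E) {δ : ℝ} (hδ : 0 < δ) :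
    ∀ᶠ t in 𝓝[≠] (0 : ℝ), t ≠ 0 ∧ ‖t • v‖ ≤ δ := by
  have hnorm : Tendsto (fun t : ℝ => ‖t • v‖) (𝓝 0) (𝓝 0) := by
    simpa using ((tendsto_id (x := 𝓝 (0 : ℝ))).smul_const v).norm
  filter_upwards [self_mem_nhdsWithin, nhdsWithin_le_nhds (hnorm.eventually (ge_mem_nhds hδ))]
    with t ht hle
  exact ⟨ht, hle⟩

variable {Δ : E → V} {B : E →L[ℝ] E →L[ℝ] ℝ}

theorem abs_inner_smul_inv_sub_le {ε δ : ℝ}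
    (hΔ : ∀ a b : E, ‖a‖ ≤ δ → ‖b‖ ≤ δ → |⟪Δ a, Δ b⟫ - B a b| ≤ ε * ‖a‖ * ‖b‖)
    {s t : ℝ} (hs : s ≠ 0) (ht : t ≠ 0) {v w : E} (hv : ‖s • v‖ ≤ δ) (hw : ‖t • w‖ ≤ δ) :
    |⟪s⁻¹ • Δ (s • v), t⁻¹ • Δ (t • w)⟫ - B v w| ≤ ε * ‖v‖ * ‖w‖ := by
  have hrescale : ⟪s⁻¹ • Δ (s • v), t⁻¹ • Δ (t • w)⟫ - B v w
      = (s * t)⁻¹ * (⟪Δ (s • v), Δ (t • w)⟫ - B (s • v) (t • w)) := by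
    simp only [real_inner_smul_left, real_inner_smul_right, map_smul, smul_apply, smul_eq_mul]
    field_simp
  rw [hrescale, abs_mul, abs_inv, abs_mul, ← Real.norm_eq_abs s, ← Real.norm_eq_abs t]
  calc _ ≤ (‖s‖ * ‖t‖)⁻¹ * (ε * ‖s • v‖ * ‖t • w‖) := by gcongr; exact hΔ _ _ hv hw
    _ = ε * ‖v‖ * ‖w‖ := by
      rw [norm_smul, norm_smul]
      field_simp [norm_ne_zero_iff.2 hs, norm_ne_zero_iff.2 ht]

theorem InnerApproxBilinear.tendsto_inner_smul_inv (hΔ : InnerApproxBilinear Δ B) (v w : E) :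
    Tendsto (fun p : ℝ × ℝ => ⟪p.1⁻¹ • Δ (p.1 • v), p.2⁻¹ • Δ (p.2 • w)⟫)
      (𝓝[≠] 0 ×ˢ 𝓝[≠] 0) (𝓝 (B v w)) := by
  rw [Metric.tendsto_nhds]
  intro ε hε
  obtain ⟨δ, hδ, hΔδ⟩ := hΔ (ε / (‖v‖ * ‖w‖ + 1)) (by positivity)
  filter_upwards [(eventually_ne_zero_and_norm_smul_le v hδ).prod_mk
    (eventually_ne_zero_and_norm_smul_le w hδ)] with p ⟨⟨hs, hv⟩, ht, hw⟩
  rw [Real.dist_eq]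
  calc _ ≤ ε / (‖v‖ * ‖w‖ + 1) * ‖v‖ * ‖w‖ := abs_inner_smul_inv_sub_le hΔδ hs ht hv hw
    _ < ε := by
      rw [mul_assoc, div_mul_eq_mul_div, div_lt_iff₀ (by positivity)]
      nlinarith [mul_nonneg (norm_nonneg v) (norm_nonneg w)]

theorem InnerApproxBilinear.exists_tendsto_smul_inv [CompleteSpace V]
    (hΔ : InnerApproxBilinear Δ B) (v : E) :
    ∃ z, Tendsto (fun t : ℝ => t⁻¹ • Δ (t • v)) (𝓝[≠] 0) (𝓝 z) := by
  refine cauchy_map_iff_exists_tendsto.1 (cauchy_map_iff.2 ⟨inferInstance, ?_⟩)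
  rw [tendsto_uniformity_iff_dist_tendsto_zero]
  set q := fun t : ℝ => t⁻¹ • Δ (t • v)
  have hT := hΔ.tendsto_inner_smul_inv v v
  have hsq : Tendsto (fun p : ℝ × ℝ => ⟪q p.1, q p.1⟫ - 2 * ⟪q p.1, q p.2⟫ + ⟪q p.2, q p.2⟫)
      (𝓝[≠] 0 ×ˢ 𝓝[≠] 0) (𝓝 (B v v - 2 * B v v + B v v)) :=
    ((hT.comp (tendsto_fst.prodMk tendsto_fst)).sub (hT.const_mul 2)).add
      (hT.comp (tendsto_snd.prodMk tendsto_snd))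
  rw [show B v v - 2 * B v v + B v v = 0 by ring] at hsq
  convert hsq.sqrt using 2 with p
  · rw [dist_eq_norm, ← Real.sqrt_sq (norm_nonneg _), norm_sub_sq_real,
      real_inner_self_eq_norm_sq, real_inner_self_eq_norm_sq]
  · simp

theorem abs_inner_sub_le_of_tendsto {ε δ : ℝ} (hδ : 0 < δ)
    (hΔ : ∀ a b : E, ‖a‖ ≤ δ → ‖b‖ ≤ δ → |⟪Δ a, Δ b⟫ - B a b| ≤ ε * ‖a‖ * ‖b‖)
    {v : E} {z : V} (hz : Tendsto (fun t : ℝ => t⁻¹ • Δ (t • v)) (𝓝[≠] 0) (𝓝 z))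
    {a : E} (ha : ‖a‖ ≤ δ) : |⟪Δ a, z⟫ - B a v| ≤ ε * ‖a‖ * ‖v‖ := by
  refine le_of_tendsto ((tendsto_const_nhds.inner hz).sub_const _).abs ?_
  filter_upwards [eventually_ne_zero_and_norm_smul_le v hδ] with t ⟨ht, hv⟩
  simpa using abs_inner_smul_inv_sub_le hΔ one_ne_zero ht (by simpa using ha) hv

theorem exists_continuousLinearMap_of_inner_eq (u : E → V) (h : ∀ v w, ⟪u v, u w⟫ = B v w) :
    ∃ L : E →L[ℝ] V, ⇑L = u := by
  have hadd : ∀ v w, u (v + w) = u v + u w := fun v w => by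
    rw [← sub_eq_zero, ← inner_self_eq_zero (𝕜 := ℝ)]
    simp only [inner_sub_left, inner_sub_right, inner_add_left, inner_add_right, h, map_add,
      add_apply]
    ring
  have hsmul : ∀ (c : ℝ) v, u (c • v) = c • u v := fun c v => by
    rw [← sub_eq_zero, ← inner_self_eq_zero (𝕜 := ℝ)]
    simp only [inner_sub_left, inner_sub_right, real_inner_smul_left, real_inner_smul_right, h,
      map_smul, smul_apply, smul_eq_mul]
    ring
  have hbound : ∀ v, ‖u v‖ ≤ √‖B‖ * ‖v‖ := fun v => by
    rw [← Real.sqrt_sq (norm_nonneg (u v)), ← real_inner_self_eq_norm_sq, h,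
      ← Real.sqrt_sq (norm_nonneg v), ← Real.sqrt_mul (norm_nonneg B)]
    refine Real.sqrt_le_sqrt ((Real.le_norm_self _).trans ?_)
    simpa [pow_two, mul_assoc] using B.le_opNorm₂ v v
  exact ⟨LinearMap.mkContinuous ⟨⟨u, hadd⟩, hsmul⟩ _ hbound, rfl⟩

theorem differentiableAt_of_innerApproxBilinear [CompleteSpace V] {Ψ : E → V} {θ : E}
    (hB : InnerApproxBilinear (fun a => Ψ (θ + a) - Ψ θ) B) : DifferentiableAt ℝ Ψ θ := by
  choose u hu using hB.exists_tendsto_smul_inv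
  have hinner : ∀ v w, ⟪u v, u w⟫ = B v w := fun v w =>
    tendsto_nhds_unique (((hu v).comp tendsto_fst).inner ((hu w).comp tendsto_snd))
      (hB.tendsto_inner_smul_inv v w)
  obtain ⟨L, rfl⟩ := exists_continuousLinearMap_of_inner_eq u hinner
  refine ⟨L, ?_⟩
  rw [hasFDerivAt_iff_isLittleO_nhds_zero, Asymptotics.isLittleO_iff]
  intro c hc
  obtain ⟨δ, hδ, hBδ⟩ := hB (c ^ 2 / 3) (by positivity)
  filter_upwards [closedBall_mem_nhds (0 : E) hδ] with h hh
  rw [mem_closedBall_zero_iff] at hh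
  have hself := abs_le.1 (hBδ h h hh hh)
  have hcross := abs_le.1 (abs_inner_sub_le_of_tendsto hδ hBδ (hu h) hh)
  -- With `Δh = Ψ (θ + h) - Ψ θ`: `‖Δh - Lh‖² = (⟪Δh, Δh⟫ - B h h) - 2 (⟪Δh, Lh⟫ - B h h)`,
  -- and each bracket is at most `(c²/3) ‖h‖²` in absolute value.
  have hsq : ‖Ψ (θ + h) - Ψ θ - L h‖ ^ 2 ≤ (c * ‖h‖) ^ 2 := by
    rw [norm_sub_sq_real, ← real_inner_self_eq_norm_sq, ← real_inner_self_eq_norm_sq, hinner]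
    nlinarith
  exact (pow_le_pow_iff_left₀ (norm_nonneg _) (by positivity) two_ne_zero).1 hsq

theorem differentiable_of_contDiff_inner [CompleteSpace V] {Ψ : E → V}
    (hΨ : ContDiff ℝ 2 fun p : E × E => ⟪Ψ p.1, Ψ p.2⟫) : Differentiable ℝ Ψ := fun θ =>
  differentiableAt_of_innerApproxBilinear
    (B := (fderiv ℝ (fderiv ℝ fun p : E × E => ⟪Ψ p.1, Ψ p.2⟫) (θ, θ)).bilinearComp
      (.inl ℝ E E) (.inr ℝ E E)) fun ε hε => by
    obtain ⟨δ, hδ, hmixed⟩ := abs_mixed_sub_sub_fderiv_fderiv_le hΨ θ θ hε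
    refine ⟨δ, hδ, fun a b ha hb => ?_⟩
    convert hmixed a b ha hb using 3
    · simp only [inner_sub_left, inner_sub_right]
      ring
    · rfl

end InnerIncrements

theorem sq_inner_sub_gram_le {V ι : Type*} [NormedAddCommGroup V] [InnerProductSpace ℝ V]
    [Fintype ι] [DecidableEq ι] (P : ι → V) (K : Matrix ι ι ℝ) (hK : ∀ i j, K i j = ⟪P i, P j⟫)
    [Invertible K] (w u : V) {C : ℝ} (hw : ‖w‖ ≤ C) :
    (⟪w, u⟫ - ∑ j, ⟪P j, u⟫ * (K⁻¹ *ᵥ fun l => ⟪w, P l⟫) j) ^ 2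
      ≤ C ^ 2 * (⟪u, u⟫ - ∑ j, ∑ l, ⟪P j, u⟫ * K⁻¹ j l * ⟪P l, u⟫) := by
  set v : ι → ℝ := fun j => ⟪P j, u⟫
  set c := v ᵥ* K⁻¹
  -- `s` is the orthogonal projection of `u` onto the span of the `P l`.
  set s := ∑ l, c l • P l
  have hsP : ∀ m, ⟪s, P m⟫ = v m := fun m => by
    have hcK : ∑ l, c l * K l m = v m := by
      change (c ᵥ* K) m = v m
      rw [Matrix.vecMul_vecMul, Matrix.inv_mul_of_invertible, Matrix.vecMul_one]
    simp only [s, sum_inner, real_inner_smul_left, ← hK, hcK]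
  have hinner_s : ∀ z, ⟪z, s⟫ = ∑ l, c l * ⟪z, P l⟫ := fun z => by
    simp only [s, inner_sum, real_inner_smul_right]
  have hws : ⟪w, s⟫ = ∑ j, v j * (K⁻¹ *ᵥ fun l => ⟪w, P l⟫) j := by
    rw [hinner_s]
    exact Matrix.dotProduct_mulVec v K⁻¹ _ |>.symm
  have hus : ⟪u, s⟫ = ∑ l, c l * v l := by
    simp only [hinner_s, v, real_inner_comm u]
  have hss : ⟪s, s⟫ = ⟪u, s⟫ := by
    rw [hinner_s, hus]
    simp only [hsP]
  have hcv : ∑ l, c l * v l = ∑ j, ∑ l, v j * K⁻¹ j l * v l := by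
    simp only [c, Matrix.vecMul, dotProduct, sum_mul]
    exact sum_comm
  have hres : ‖u - s‖ ^ 2 = ⟪u, u⟫ - ⟪u, s⟫ := by
    rw [norm_sub_sq_real, ← real_inner_self_eq_norm_sq, ← real_inner_self_eq_norm_sq, hss]
    ring
  calc _ = ⟪w, u - s⟫ ^ 2 := by rw [inner_sub_right, hws]
    _ ≤ (C * ‖u - s‖) ^ 2 := sq_le_sq.2 ((abs_real_inner_le_norm _ _).trans
        (le_abs_self _ |>.trans' (by gcongr)))
    _ = C ^ 2 * (⟪u, u⟫ - ∑ j, ∑ l, ⟪P j, u⟫ * K⁻¹ j l * ⟪P l, u⟫) := by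
      rw [mul_pow, hres, hus, hcv]

/-- Noiseless gradient bias bound for RKHS interpolation (Lemma 1 of Wu et al. 2024).
The RKHS of the `C²` kernel `k` is presented via a feature map `Φ` into a Hilbert space
`H`, with `f = ⟪w, Φ(·)⟫` and `‖w‖_H ≤ C`. With `K = k(D,D)` invertible and
`g(θ) = ∇k(θ,D) K⁻¹ f(D)` the gradient of the minimum-norm interpolant, the squared
error `‖∇f(θ) − g(θ)‖²` is bounded by `C²` times the trace of the posterior gradient
covariance `∇k_D(θ,θ)∇ᵀ`. -/
theorem rkhs_gradient_bias_bound {d b : ℕ}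
    {H : Type*} [NormedAddCommGroup H] [InnerProductSpace ℝ H]
    (k : EuclideanSpace ℝ (Fin d) → EuclideanSpace ℝ (Fin d) → ℝ)
    (hk : ContDiff ℝ 2 (fun p : EuclideanSpace ℝ (Fin d) × EuclideanSpace ℝ (Fin d) =>
      k p.1 p.2))
    (Φ : EuclideanSpace ℝ (Fin d) → H) (hfeat : ∀ x y, k x y = ⟪Φ x, Φ y⟫)
    (w : H) (C : ℝ) (hw : ‖w‖ ≤ C)
    (f : EuclideanSpace ℝ (Fin d) → ℝ) (hf : ∀ x, f x = ⟪w, Φ x⟫)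
    (D : Fin b → EuclideanSpace ℝ (Fin d))
    (K : Matrix (Fin b) (Fin b) ℝ) (hK : K = Matrix.of fun i j => k (D i) (D j))
    [Invertible K] (θ : EuclideanSpace ℝ (Fin d)) :
    ∑ i, (fderiv ℝ f θ (EuclideanSpace.single i 1)
        - ∑ j, fderiv ℝ (fun x => k x (D j)) θ (EuclideanSpace.single i 1)
            * (K⁻¹.mulVec fun l => f (D l)) j) ^ 2
      ≤ C ^ 2 *
        ∑ i, (fderiv ℝ (fun y => fderiv ℝ (fun x => k x y) θ (EuclideanSpace.single i 1))
                θ (EuclideanSpace.single i 1)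
          - ∑ j, ∑ l, fderiv ℝ (fun x => k x (D j)) θ (EuclideanSpace.single i 1)
              * K⁻¹ j l
              * fderiv ℝ (fun y => k (D l) y) θ (EuclideanSpace.single i 1)) := by
  -- The difference quotients of `Φ` converge only in the completion of `H`.
  let Φ' : EuclideanSpace ℝ (Fin d) → UniformSpace.Completion H := fun x => Φ x
  have hΦ' : ∀ x y, ⟪Φ' x, Φ' y⟫ = k x y := fun x y => by
    rw [hfeat, UniformSpace.Completion.inner_coe]
  have hΦ'θ : DifferentiableAt ℝ Φ' θ :=
    differentiable_of_contDiff_inner (by simpa only [hΦ'] using hk) θ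
  set L := fderiv ℝ Φ' θ
  have hderiv : ∀ z (g : EuclideanSpace ℝ (Fin d) → ℝ), (∀ x, g x = ⟪z, Φ' x⟫) →
      ∀ v, fderiv ℝ g θ v = ⟪z, L v⟫ := fun z g hg v => by
    rw [funext hg, fderiv_inner_apply ℝ (differentiableAt_const z) hΦ'θ]
    simp [L]
  have hf' : ∀ x, f x = ⟪(w : UniformSpace.Completion H), Φ' x⟫ := fun x => by
    rw [hf, UniformSpace.Completion.inner_coe]
  have hgrad_f : ∀ v, fderiv ℝ f θ v = ⟪(w : UniformSpace.Completion H), L v⟫ := hderiv _ f hf'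
  have hgrad_k : ∀ y v, fderiv ℝ (fun x => k x y) θ v = ⟪Φ' y, L v⟫ := fun y =>
    hderiv _ _ fun x => by rw [← hΦ', real_inner_comm]
  have hgrad_k' : ∀ y v, fderiv ℝ (k y) θ v = ⟪Φ' y, L v⟫ := fun y =>
    hderiv _ _ fun x => (hΦ' y x).symm
  have hhess : ∀ v v', fderiv ℝ (fun y => ⟪Φ' y, L v⟫) θ v' = ⟪L v, L v'⟫ := fun v =>
    hderiv _ _ fun y => real_inner_comm _ _
  have hKΦ' : ∀ i j, K i j = ⟪Φ' (D i), Φ' (D j)⟫ := fun i j => by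
    rw [hK, hΦ', Matrix.of_apply]
  have hw' : ‖(w : UniformSpace.Completion H)‖ ≤ C := by
    rwa [UniformSpace.Completion.norm_coe]
  simp only [hgrad_f, hgrad_k, hgrad_k', hhess, hf']
  rw [mul_sum]
  exact sum_le_sum fun i _ => sq_inner_sub_gram_le (fun l => Φ' (D l)) K hKΦ' _ _ hw'
end
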